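/- In the SPC labelled transition system, weak bisimilarity is compatible with prefixing and with parallel composition: if P ≈ Q then δ.P ≈ δ.Q for every δ ∈ Δτ, and if P₁ ≈ Q₁ and P₂ ≈ Q₂ then P₁ ∥ P₂ ≈ Q₁ ∥ Q₂. -/

import Mathlib

/-- Labels `Δτ = Δ ∪ Δ̄ ∪ {τ}`: actions, coactions and the internal action `τ`. -/
inductive Lab (Δ : Type) : Type
  | act : Δ → Lab Δ
  | coact : Δ → Lab Δ
  | tau : Lab Δ

/-- Processes of the simple process calculus SPC:
`p ::= 0 | δ.p | p ∥ q | p + q`. -/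
inductive Proc (Δ : Type) : Type
  | nil : Proc Δ
  | pre : Lab Δ → Proc Δ → Proc Δ
  | par : Proc Δ → Proc Δ → Proc Δ
  | choice : Proc Δ → Proc Δ → Proc Δ

/-- The labelled transition system of SPC. -/
inductive Step {Δ : Type} : Proc Δ → Lab Δ → Proc Δ → Prop
  | pre (δ : Lab Δ) (p : Proc Δ) : Step (.pre δ p) δ p
  | choiceL {p p' q : Proc Δ} {δ : Lab Δ} : Step p δ p' → Step (.choice p q) δ p'
  | choiceR {p q q' : Proc Δ} {δ : Lab Δ} : Step q δ q' → Step (.choice p q) δ q'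
  | parL {p p' q : Proc Δ} {δ : Lab Δ} : Step p δ p' → Step (.par p q) δ (.par p' q)
  | parR {p q q' : Proc Δ} {δ : Lab Δ} : Step q δ q' → Step (.par p q) δ (.par p q')
  | syn {p p' q q' : Proc Δ} {a : Δ} :
      Step p (.act a) p' → Step q (.coact a) q' → Step (.par p q) .tau (.par p' q')

/-- `p ⇒ q`: the reflexive–transitive closure of `→τ`, for an arbitrary
labelled transition relation `step`. -/
def TauStar {Δ P : Type} (step : P → Lab Δ → P → Prop) : P → P → Prop :=
  Relation.ReflTransGen (fun p q => step p Lab.tau q)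

/-- The weak transition relation `p ⇒δ q`: for `δ = τ` it is `p ⇒ q`,
otherwise `p ⇒ p' →δ q' ⇒ q`. -/
def WStep {Δ P : Type} (step : P → Lab Δ → P → Prop) (p : P) (δ : Lab Δ) (q : P) : Prop :=
  (δ = Lab.tau ∧ TauStar step p q) ∨
  (δ ≠ Lab.tau ∧ ∃ p' q', TauStar step p p' ∧ step p' δ q' ∧ TauStar step q' q)

/-- A relation `R` is a weak bisimulation if every step from one side is matched
by a weak step from the other side, ending in `R`-related states. -/
def IsWeakBisim {Δ P : Type} (step : P → Lab Δ → P → Prop) (R : P → P → Prop) : Prop :=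
  ∀ p q, R p q →
    (∀ δ p', step p δ p' → ∃ q', WStep step q δ q' ∧ R p' q') ∧
    (∀ δ q', step q δ q' → ∃ p', WStep step p δ p' ∧ R p' q')

/-- Weak bisimilarity `p ≈ q`: `p` and `q` are related by some weak bisimulation. -/
def WBisim {Δ P : Type} (step : P → Lab Δ → P → Prop) (p q : P) : Prop :=
  ∃ R, IsWeakBisim step R ∧ R p q

/-! For prefixing, the only step of `δ.P` is `δ.P →δ P`, matched by `δ.Q →δ Q`; since
bisimilarity is a fixed point of the step-matching condition, `δ.P ≈ δ.Q`. For parallel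
composition, if `R` and `S` are weak bisimulations then so is
`{(p₁ ∥ p₂, q₁ ∥ q₂) | R p₁ q₁, S p₂ q₂}`: a step of one component is matched by a weak step of
the corresponding component, and a synchronisation `p₁ →a`, `p₂ →ā` by weak steps `q₁ ⇒a`,
`q₂ ⇒ā`, whose τ-prefixes and suffixes interleave around one synchronisation into `q₁ ∥ q₂ ⇒ …`. -/

section WeakBisimulation

variable {Δ P : Type} {step : P → Lab Δ → P → Prop}

def IsWeakSim (step : P → Lab Δ → P → Prop) (R : P → P → Prop) : Prop :=
  ∀ p q, R p q → ∀ δ p', step p δ p' → ∃ q', WStep step q δ q' ∧ R p' q'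

theorem isWeakBisim_iff {R : P → P → Prop} :
    IsWeakBisim step R ↔ IsWeakSim step R ∧ IsWeakSim step (flip R) :=
  ⟨fun h => ⟨fun p q hpq => (h p q hpq).1, fun q p hpq => (h p q hpq).2⟩,
    fun ⟨h₁, h₂⟩ p q hpq => ⟨h₁ p q hpq, h₂ q p hpq⟩⟩

theorem WStep.of_step {p q : P} {δ : Lab Δ} (h : step p δ q) : WStep step p δ q := by
  by_cases hδ : δ = Lab.tau
  · subst hδ
    exact Or.inl ⟨rfl, .single h⟩
  · exact Or.inr ⟨hδ, p, q, .refl, h, .refl⟩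

theorem isWeakBisim_wbisim : IsWeakBisim step (WBisim step) := by
  rintro p q ⟨R, hR, hpq⟩
  obtain ⟨hl, hr⟩ := hR p q hpq
  exact ⟨fun δ p' h => (hl δ p' h).imp fun _ => .imp_right fun h' => ⟨R, hR, h'⟩,
    fun δ q' h => (hr δ q' h).imp fun _ => .imp_right fun h' => ⟨R, hR, h'⟩⟩

theorem WBisim.of_forall_step {p q : P}
    (hl : ∀ δ p', step p δ p' → ∃ q', WStep step q δ q' ∧ WBisim step p' q')
    (hr : ∀ δ q', step q δ q' → ∃ p', WStep step p δ p' ∧ WBisim step p' q') :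
    WBisim step p q := by
  refine ⟨fun x y => (x = p ∧ y = q) ∨ WBisim step x y, ?_, .inl ⟨rfl, rfl⟩⟩
  rintro x y (⟨rfl, rfl⟩ | hxy)
  · exact ⟨fun δ p' h => (hl δ p' h).imp fun _ => .imp_right .inr,
      fun δ q' h => (hr δ q' h).imp fun _ => .imp_right .inr⟩
  · obtain ⟨hl', hr'⟩ := isWeakBisim_wbisim x y hxy
    exact ⟨fun δ p' h => (hl' δ p' h).imp fun _ => .imp_right .inr,
      fun δ q' h => (hr' δ q' h).imp fun _ => .imp_right .inr⟩

end WeakBisimulation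

section SPC

open Proc

variable {Δ : Type}

theorem TauStar.par_left {p p' q : Proc Δ} (h : TauStar Step p p') :
    TauStar Step (par p q) (par p' q) :=
  h.lift (par · q) fun _ _ => Step.parL

theorem TauStar.par_right {p q q' : Proc Δ} (h : TauStar Step q q') :
    TauStar Step (par p q) (par p q') :=
  h.lift (par p ·) fun _ _ => Step.parR

theorem WStep.par_left {p p' q : Proc Δ} {δ : Lab Δ} (h : WStep Step p δ p') :
    WStep Step (par p q) δ (par p' q) := by
  rcases h with ⟨hδ, h⟩ | ⟨hδ, p₁, p₂, h₁, h₂, h₃⟩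
  · exact .inl ⟨hδ, h.par_left⟩
  · exact .inr ⟨hδ, _, _, h₁.par_left, .parL h₂, h₃.par_left⟩

theorem WStep.par_right {p q q' : Proc Δ} {δ : Lab Δ} (h : WStep Step q δ q') :
    WStep Step (par p q) δ (par p q') := by
  rcases h with ⟨hδ, h⟩ | ⟨hδ, q₁, q₂, h₁, h₂, h₃⟩
  · exact .inl ⟨hδ, h.par_right⟩
  · exact .inr ⟨hδ, _, _, h₁.par_right, .parR h₂, h₃.par_right⟩

theorem WStep.syn {p p' q q' : Proc Δ} {a : Δ}
    (hp : WStep Step p (.act a) p') (hq : WStep Step q (.coact a) q') :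
    WStep Step (par p q) .tau (par p' q') := by
  obtain ⟨⟨⟩, _⟩ | ⟨-, p₁, p₂, hp₁, hp₂, hp₃⟩ := hp
  obtain ⟨⟨⟩, _⟩ | ⟨-, q₁, q₂, hq₁, hq₂, hq₃⟩ := hq
  -- p ∥ q ⇒ p₁ ∥ q₁ →τ p₂ ∥ q₂ ⇒ p' ∥ q'
  refine .inl ⟨rfl, (hp₁.par_left.trans hq₁.par_right).trans (.head (.syn hp₂ hq₂) ?_)⟩
  exact hp₃.par_left.trans hq₃.par_right

inductive ParLift (R S : Proc Δ → Proc Δ → Prop) : Proc Δ → Proc Δ → Prop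
  | mk {p₁ q₁ p₂ q₂ : Proc Δ} : R p₁ q₁ → S p₂ q₂ → ParLift R S (par p₁ p₂) (par q₁ q₂)

theorem ParLift.flip (R S : Proc Δ → Proc Δ → Prop) :
    flip (ParLift R S) = ParLift (flip R) (flip S) := by
  funext p q
  apply propext
  constructor <;> rintro ⟨h₁, h₂⟩ <;> exact .mk h₁ h₂

theorem IsWeakSim.parLift {R S : Proc Δ → Proc Δ → Prop}
    (hR : IsWeakSim Step R) (hS : IsWeakSim Step S) : IsWeakSim Step (ParLift R S) := by
  rintro _ _ ⟨hpq₁, hpq₂⟩ δ p' h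
  cases h with
  | parL h =>
    obtain ⟨q₁', hq, hpq₁'⟩ := hR _ _ hpq₁ _ _ h
    exact ⟨_, hq.par_left, .mk hpq₁' hpq₂⟩
  | parR h =>
    obtain ⟨q₂', hq, hpq₂'⟩ := hS _ _ hpq₂ _ _ h
    exact ⟨_, hq.par_right, .mk hpq₁ hpq₂'⟩
  | syn h₁ h₂ =>
    obtain ⟨q₁', hq₁, hpq₁'⟩ := hR _ _ hpq₁ _ _ h₁
    obtain ⟨q₂', hq₂, hpq₂'⟩ := hS _ _ hpq₂ _ _ h₂
    exact ⟨_, hq₁.syn hq₂, .mk hpq₁' hpq₂'⟩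

theorem IsWeakBisim.parLift {R S : Proc Δ → Proc Δ → Prop}
    (hR : IsWeakBisim Step R) (hS : IsWeakBisim Step S) :
    IsWeakBisim Step (ParLift R S) := by
  rw [isWeakBisim_iff] at hR hS ⊢
  refine ⟨hR.1.parLift hS.1, ?_⟩
  rw [ParLift.flip]
  exact hR.2.parLift hS.2

theorem WBisim.par {p₁ q₁ p₂ q₂ : Proc Δ} (h₁ : WBisim Step p₁ q₁) (h₂ : WBisim Step p₂ q₂) :
    WBisim Step (par p₁ p₂) (par q₁ q₂) := by
  obtain ⟨R, hR, hpq₁⟩ := h₁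
  obtain ⟨S, hS, hpq₂⟩ := h₂
  exact ⟨ParLift R S, hR.parLift hS, .mk hpq₁ hpq₂⟩

theorem WBisim.pre {p q : Proc Δ} (h : WBisim Step p q) (δ : Lab Δ) :
    WBisim Step (pre δ p) (pre δ q) := by
  refine .of_forall_step ?_ ?_ <;> rintro _ _ ⟨⟩
  · exact ⟨q, .of_step (.pre δ q), h⟩
  · exact ⟨p, .of_step (.pre δ p), h⟩

end SPC

/-- Weak bisimilarity in SPC is compatible with prefixing and with parallel
composition: if `P ≈ Q` then `δ.P ≈ δ.Q`, and if `P₁ ≈ Q₁` and `P₂ ≈ Q₂` then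
`P₁ ∥ P₂ ≈ Q₁ ∥ Q₂`. -/
theorem wbisim_compat_pre_par (Δ : Type) :
    (∀ (P Q : Proc Δ) (δ : Lab Δ),
      WBisim Step P Q → WBisim Step (Proc.pre δ P) (Proc.pre δ Q)) ∧
    (∀ P₁ Q₁ P₂ Q₂ : Proc Δ,
      WBisim Step P₁ Q₁ → WBisim Step P₂ Q₂ →
      WBisim Step (Proc.par P₁ P₂) (Proc.par Q₁ Q₂)) :=
  ⟨fun _ _ δ h => h.pre δ, fun _ _ _ _ h₁ h₂ => h₁.par h₂⟩
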